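/- Let G be a parity game and let ρ̄ be the least game parity progress measure of G. The positional strategy σ for player Even defined by choosing, for each v ∈ V_Even with ρ̄(v) ≠ ⊤, a successor w ∈ post(v) with ρ̄(w) ≤ ρ̄(w′) for all w′ ∈ post(v), is a winning strategy for Even from every vertex v with ρ̄(v) ≠ ⊤. -/

import Mathlib

/-!
Along a play that follows `σ` from a vertex with `ρbar ≠ ⊤`, the measure stays below `⊤` and
every step `v → w` satisfies `ρbar v ≥_{P v} ρbar w`, strictly when `P v` is odd: at Odd's
vertices this is the progress-measure condition, and at Even's vertices the successor chosen by
`σ` has measure at most that of the witness of the condition. If the least priority `i` seen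
infinitely often were odd, then from some point on all priorities are at least `i`, so the
truncations of `ρbar` to the components `0, …, i` form a non-increasing sequence in a
well-founded order which strictly decreases infinitely often.
-/

open Classical

noncomputable section

instance (priority := 5000) (n : ℕ) : WellFoundedLT (Fin n) :=
  Finite.to_wellFoundedLT

noncomputable instance (priority := 5000) (n : ℕ) : LinearOrder (Lex (Fin n → ℕ)) :=
  inferInstance

/-- Least element of a set, if it exists; otherwise a default value. -/
def sLeast {α : Type*} [Preorder α] (s : Set α) (dflt : α) : α :=
  if h : ∃ a, IsLeast s a then h.choose else dflt

/-- Greatest element of a set, if it exists; otherwise a default value. -/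
def sGreatest {α : Type*} [Preorder α] (s : Set α) (dflt : α) : α :=
  if h : ∃ a, IsGreatest s a then h.choose else dflt

/-- A parity game: a finite set of vertices with a total edge relation, a priority
function and an ownership function (`ownerEven v = true` iff `v ∈ V_Even`). -/
structure ParityGame (V : Type*) [Fintype V] where
  E : V → V → Prop
  total : ∀ v, ∃ w, E v w
  prio : V → ℕ
  ownerEven : V → Bool

namespace ParityGame

variable {V : Type*} [Fintype V] [DecidableEq V] (G : ParityGame V)

/-- `d` is one plus the maximal priority occurring in the game. -/
def d : ℕ := (Finset.univ.sup G.prio) + 1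

/-- The domain of (extended) measures: `⊤` together with `d`-tuples of naturals,
ordered lexicographically with `⊤` maximal.  This is `M_Even_ext` (together with
tuples that are nonzero at even positions, which are never used). -/
abbrev Meas : Type _ := WithTop (Lex (Fin G.d → ℕ))

/-- `nP i` is the number of vertices of priority `i`. -/
def nP (i : ℕ) : ℕ := (Finset.univ.filter (fun v => G.prio v = i)).card

/-- Membership in `M_Even`: `⊤`, or a `d`-tuple which is `0` at even positions and
bounded by `nP i` at odd positions `i`. -/
def inMEven (m : G.Meas) : Prop :=
  m = ⊤ ∨ ∃ f : Fin G.d → ℕ, m = ((toLex f : Lex (Fin G.d → ℕ)) : G.Meas) ∧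
    ∀ i : Fin G.d, (Even (i : ℕ) → f i = 0) ∧ (¬ Even (i : ℕ) → f i ≤ G.nP (i : ℕ))

/-- Membership in `M_Even_ext`: `⊤`, or a `d`-tuple which is `0` at even positions. -/
def inMEvenExt (m : G.Meas) : Prop :=
  m = ⊤ ∨ ∃ f : Fin G.d → ℕ, m = ((toLex f : Lex (Fin G.d → ℕ)) : G.Meas) ∧
    ∀ i : Fin G.d, Even (i : ℕ) → f i = 0

/-- Truncation of a measure to components `0, …, k` (other components set to `0`);
`⊤` is mapped to `⊤`. -/
def trunc (k : ℕ) (m : G.Meas) : G.Meas :=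
  WithTop.map (fun f : Lex (Fin G.d → ℕ) => toLex (fun j : Fin G.d => if (j : ℕ) ≤ k then ofLex f j else 0)) m

/-- `a ≥_k b` : comparison of measures on components `0, …, k` only. -/
def geAt (k : ℕ) (a b : G.Meas) : Prop := G.trunc k b ≤ G.trunc k a

/-- `a >_k b` : strict comparison of measures on components `0, …, k` only. -/
def gtAt (k : ℕ) (a b : G.Meas) : Prop := G.trunc k b < G.trunc k a

/-- The defining condition of `Prog(ρ,v,w)`. -/
def progCond (ρ : V → G.Meas) (v w : V) (m : G.Meas) : Prop :=
  if Even (G.prio v) then G.geAt (G.prio v) m (ρ w)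
  else (G.gtAt (G.prio v) m (ρ w) ∨ (m = ⊤ ∧ ρ w = ⊤))

/-- `Prog(ρ,v,w)`: the least element of `M_Even` satisfying `progCond`. -/
def Prog (ρ : V → G.Meas) (v w : V) : G.Meas :=
  if h : ∃ m, IsLeast {m | G.inMEven m ∧ G.progCond ρ v w m} m then h.choose else ⊤

/-- `ρ` takes values in `M_Even`. -/
def IsMeasure (ρ : V → G.Meas) : Prop := ∀ v, G.inMEven (ρ v)

/-- Game parity progress measure. -/
def IsGPM (ρ : V → G.Meas) : Prop :=
  G.IsMeasure ρ ∧ ∀ v,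
    (G.ownerEven v = true → ∃ w, G.E v w ∧ G.geAt (G.prio v) (ρ v) (G.Prog ρ v w)) ∧
    (G.ownerEven v = false → ∀ w, G.E v w → G.geAt (G.prio v) (ρ v) (G.Prog ρ v w))

/-- A play: an infinite `E`-path. -/
def IsPlay (π : ℕ → V) : Prop := ∀ n, G.E (π n) (π (n + 1))

/-- Priority `p` occurs infinitely often on `π`. -/
def InfOft (π : ℕ → V) (p : ℕ) : Prop := ∀ N, ∃ n, N ≤ n ∧ G.prio (π n) = p

/-- A play is won by Even iff the least priority occurring infinitely often is even. -/
def WonByEven (π : ℕ → V) : Prop := Even (sInf {p | G.InfOft π p})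

/-- Won by player `i` (`true` = Even, `false` = Odd). -/
def WonBy (i : Bool) (π : ℕ → V) : Prop :=
  if i then G.WonByEven π else ¬ G.WonByEven π

/-- The history of a play before time `n`. -/
def hist (π : ℕ → V) (n : ℕ) : List V := List.ofFn (fun k : Fin n => π (k : ℕ))

/-- A (history-dependent) strategy for player `i` is valid if it always moves along edges
from vertices of player `i`. -/
def ValidStrat (i : Bool) (σ : List V → V → V) : Prop :=
  ∀ h v, G.ownerEven v = i → G.E v (σ h v)

/-- Consistency of a play with a history-dependent strategy of player `i`. -/
def ConsH (i : Bool) (σ : List V → V → V) (π : ℕ → V) : Prop :=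
  ∀ n, G.ownerEven (π n) = i → π (n + 1) = σ (hist π n) (π n)

/-- Consistency of a play with a positional strategy of player `i`. -/
def ConsP (i : Bool) (σ : V → V) (π : ℕ → V) : Prop :=
  ∀ n, G.ownerEven (π n) = i → π (n + 1) = σ (π n)

/-- Winning region of player `i`: vertices from which `i` has a winning strategy. -/
def WinRegion (i : Bool) : Set V :=
  {v | ∃ σ : List V → V → V, G.ValidStrat i σ ∧
    ∀ π, G.IsPlay π → π 0 = v → G.ConsH i σ π → G.WonBy i π}

/-- The `i`-attractor into `U`. -/
def Attr (i : Bool) (U : Set V) : Set V :=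
  ⋂₀ {A | U ⊆ A ∧
    (∀ v, G.ownerEven v = i → (∃ w, G.E v w ∧ w ∈ A) → v ∈ A) ∧
    (∀ v, G.ownerEven v ≠ i → (∀ w, G.E v w → w ∈ A) → v ∈ A)}

/-- The guarded attractor `Attr^{≥k}_{Odd,W}(U)`. -/
def GAttr (k : ℕ) (W U : Set V) : Set V :=
  ⋂₀ {A | U ⊆ A ∧ A ⊆ W ∩ {v | k ≤ G.prio v} ∧
    ∀ u ∈ W ∩ {v | k ≤ G.prio v},
      (G.ownerEven u = false → (∃ w, G.E u w ∧ w ∈ A) → u ∈ A) ∧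
      (G.ownerEven u = true → (∀ w, G.E u w → w ∈ W → w ∈ A) → u ∈ A)}

/-- The lifting operator `Lift(ρ, v)`. -/
def Lift (ρ : V → G.Meas) (v : V) : V → G.Meas :=
  Function.update ρ v
    (if G.ownerEven v = true
      then max (ρ v) (sLeast {m | ∃ w, G.E v w ∧ m = G.Prog ρ v w} ⊤)
      else max (ρ v) (sGreatest {m | ∃ w, G.E v w ∧ m = G.Prog ρ v w} ⊤))

/-- The all-zero measure. -/
def zeroMeas : G.Meas := ((toLex (fun _ : Fin G.d => 0) : Lex (Fin G.d → ℕ)) : G.Meas)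

/-- A lifting sequence `ρ₀, …, ρ_N` in which `v` is the first vertex lifted to `⊤`. -/
def FirstTop (ρs : ℕ → V → G.Meas) (N : ℕ) (v : V) : Prop :=
  (∀ u, ρs 0 u = G.zeroMeas) ∧
  (∀ j < N, ∃ u, ρs (j + 1) = G.Lift (ρs j) u ∧
    (∀ w, ρs j w ≤ ρs (j + 1) w) ∧ ρs j ≠ ρs (j + 1)) ∧
  (∀ j < N, ∀ w, ρs j w ≠ ⊤) ∧
  ρs N v = ⊤

/-- The prefix `π 0 … π l` of a play is an `i`-dominated stretch. -/
def domStretchPrefix (π : ℕ → V) (i l : ℕ) : Prop :=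
  (∀ m ≤ l, i ≤ G.prio (π m)) ∧ (∃ m ≤ l, G.prio (π m) = i)

/-- The degree of the prefix `π 0 … π l` with respect to priority `i`: the number of
its vertices of priority `i`. -/
def degree (π : ℕ → V) (i l : ℕ) : ℕ :=
  ((Finset.range (l + 1)).filter (fun m => G.prio (π m) = i)).card

/-- The value `θ(π)` of a play: `⊤` if `π` is won by Odd, and otherwise the tuple whose
component at each odd position `i` is the degree of the maximal `i`-dominated stretch
that is a prefix of `π` (and `0` if there is no such prefix). -/
def theta (π : ℕ → V) : G.Meas :=
  if G.WonByEven π then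
    ((toLex (fun j : Fin G.d =>
      if Even (j : ℕ) then 0
      else sSup {c | ∃ l, G.domStretchPrefix π (j : ℕ) l ∧ c = G.degree π (j : ℕ) l}) :
        Lex (Fin G.d → ℕ)) : G.Meas)
  else ⊤

/-- `U` is an `i`-dominion inside the subgame induced on `W`. -/
def IsDominionIn (W : Set V) (i : Bool) (U : Set V) : Prop :=
  ∃ σ : List V → V → V,
    (∀ h u, u ∈ W → G.ownerEven u = i → G.E u (σ h u) ∧ σ h u ∈ W) ∧
    ∀ π, G.IsPlay π → (∀ n, π n ∈ W) → π 0 ∈ U → G.ConsH i σ π →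
      (∀ n, π n ∈ U) ∧ G.WonBy i π

/-- `U` is an `i`-dominion in `G`. -/
def IsDominion (i : Bool) (U : Set V) : Prop := G.IsDominionIn Set.univ i U

/-- Winning region of player `i` in the subgame induced on `W`. -/
def WinIn (W : Set V) (i : Bool) : Set V :=
  {v | v ∈ W ∧ ∃ σ : List V → V → V,
    (∀ h u, u ∈ W → G.ownerEven u = i → G.E u (σ h u) ∧ σ h u ∈ W) ∧
    ∀ π, G.IsPlay π → (∀ n, π n ∈ W) → π 0 = v → G.ConsH i σ π → G.WonBy i π}

end ParityGame

namespace Filter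

lemma not_frequently_lt_of_eventually_le {α : Type*} [PartialOrder α] [WellFoundedLT α]
    {a : ℕ → α} (h : ∀ᶠ n in atTop, a (n + 1) ≤ a n) : ¬ ∃ᶠ n in atTop, a (n + 1) < a n := by
  obtain ⟨N, hN⟩ := eventually_atTop.1 h
  have hanti : Antitone fun m => a (N + m) :=
    antitone_nat_of_succ_le fun m => hN (N + m) (Nat.le_add_right N m)
  obtain ⟨m₀, hm₀⟩ := WellFoundedLT.antitone_chain_condition hanti
  have hconst : ∀ᶠ n in atTop, a (n + 1) = a n :=
    eventually_atTop.2 ⟨N + m₀, fun n hn => by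
      have hsucc := hm₀ (n + 1 - N) (by omega)
      have hself := hm₀ (n - N) (by omega)
      rw [Nat.add_sub_cancel' (by omega : N ≤ n + 1)] at hsucc
      rw [Nat.add_sub_cancel' (by omega : N ≤ n)] at hself
      exact hsucc.symm.trans hself⟩
  intro hlt
  obtain ⟨n, hlt, heq⟩ := (hlt.and_eventually hconst).exists
  exact hlt.ne heq

end Filter

lemma Pi.Lex.monotone_truncate {n : ℕ} (k : ℕ) :
    Monotone fun f : Lex (Fin n → ℕ) =>
      toLex fun j : Fin n => if (j : ℕ) ≤ k then ofLex f j else 0 := by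
  intro f g hfg
  obtain rfl | ⟨i, hagree, hlt⟩ := hfg.eq_or_lt
  · rfl
  by_cases hik : (i : ℕ) ≤ k
  · refine le_of_lt ⟨i, fun j hj => ?_, ?_⟩
    · have hjk : (j : ℕ) ≤ k := le_trans (le_of_lt hj) hik
      show (if (j : ℕ) ≤ k then f j else 0) = (if (j : ℕ) ≤ k then g j else 0)
      rw [if_pos hjk, if_pos hjk]
      exact hagree j hj
    · show (if (i : ℕ) ≤ k then f i else 0) < (if (i : ℕ) ≤ k then g i else 0)
      rwa [if_pos hik, if_pos hik]
  · refine le_of_eq (congrArg toLex (funext fun j => ?_))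
    by_cases hjk : (j : ℕ) ≤ k
    · simp only [if_pos hjk]
      exact hagree j (show (j : ℕ) < i by omega)
    · simp only [if_neg hjk]

namespace ParityGame

open Filter

variable {V : Type*} [Fintype V] (G : ParityGame V)

lemma trunc_coe (k : ℕ) (f : Lex (Fin G.d → ℕ)) :
    G.trunc k (f : G.Meas) =
      ((toLex fun j : Fin G.d => if (j : ℕ) ≤ k then ofLex f j else 0 : Lex (Fin G.d → ℕ)) :
        G.Meas) :=
  rfl

lemma trunc_eq_top_iff {k : ℕ} {m : G.Meas} : G.trunc k m = ⊤ ↔ m = ⊤ := by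
  induction m using WithTop.recTopCoe <;> simp [trunc]

lemma trunc_mono (k : ℕ) : Monotone (G.trunc k) :=
  WithTop.monotone_map_iff.2 (Pi.Lex.monotone_truncate k)

lemma trunc_trunc {i p : ℕ} (hip : i ≤ p) (m : G.Meas) :
    G.trunc i (G.trunc p m) = G.trunc i m := by
  induction m using WithTop.recTopCoe with
  | top => rfl
  | coe f =>
    simp only [trunc_coe, ofLex_toLex]
    congr 2
    funext j
    by_cases hj : (j : ℕ) ≤ i
    · simp [hj, hj.trans hip]
    · simp [hj]

lemma ne_top_of_geAt {k : ℕ} {a b : G.Meas} (ha : a ≠ ⊤) (h : G.geAt k a b) : b ≠ ⊤ := by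
  rintro rfl
  exact ha (G.trunc_eq_top_iff.1 (top_le_iff.1 h))

variable {G} {ρ : V → G.Meas} {v w w' : V}

lemma progCond_prog (h : G.Prog ρ v w ≠ ⊤) : G.progCond ρ v w (G.Prog ρ v w) := by
  unfold Prog at h ⊢
  split_ifs at h ⊢ with hleast
  · exact hleast.choose_spec.1.2
  · exact absurd rfl h

def Progress (ρ : V → G.Meas) (v w : V) : Prop :=
  G.geAt (G.prio v) (ρ v) (ρ w) ∧ (¬ Even (G.prio v) → G.gtAt (G.prio v) (ρ v) (ρ w))

lemma Progress.of_le_right (h : G.Progress ρ v w) (hle : ρ w' ≤ ρ w) : G.Progress ρ v w' :=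
  ⟨(G.trunc_mono _ hle).trans h.1, fun hodd => (G.trunc_mono _ hle).trans_lt (h.2 hodd)⟩

lemma Progress.ne_top (h : G.Progress ρ v w) (hv : ρ v ≠ ⊤) : ρ w ≠ ⊤ :=
  G.ne_top_of_geAt hv h.1

lemma progress_of_geAt_prog (hv : ρ v ≠ ⊤) (h : G.geAt (G.prio v) (ρ v) (G.Prog ρ v w)) :
    G.Progress ρ v w := by
  have hcond := progCond_prog (G.ne_top_of_geAt hv h)
  unfold progCond at hcond
  split_ifs at hcond with hp
  · exact ⟨hcond.trans h, fun hodd => absurd hp hodd⟩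
  · rcases hcond with hlt | ⟨hprog, -⟩
    · exact ⟨(hlt.trans_le h).le, fun _ => hlt.trans_le h⟩
    · exact absurd hprog (G.ne_top_of_geAt hv h)

lemma IsGPM.progress_of_ownerEven_false (hρ : G.IsGPM ρ) (hown : G.ownerEven v = false)
    (hv : ρ v ≠ ⊤) (hvw : G.E v w) : G.Progress ρ v w :=
  progress_of_geAt_prog hv ((hρ.2 v).2 hown w hvw)

lemma IsGPM.exists_progress_of_ownerEven (hρ : G.IsGPM ρ) (hown : G.ownerEven v = true)
    (hv : ρ v ≠ ⊤) : ∃ w, G.E v w ∧ G.Progress ρ v w := by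
  obtain ⟨w, hvw, hge⟩ := (hρ.2 v).1 hown
  exact ⟨w, hvw, progress_of_geAt_prog hv hge⟩

variable (G)

lemma infOft_iff_frequently {π : ℕ → V} {p : ℕ} :
    G.InfOft π p ↔ ∃ᶠ n in atTop, G.prio (π n) = p :=
  frequently_atTop.symm

lemma eventually_sInf_infOft_le_prio (π : ℕ → V) :
    ∀ᶠ n in atTop, sInf {p | G.InfOft π p} ≤ G.prio (π n) := by
  have hrare : ∀ p ∈ Set.Iio (sInf {p | G.InfOft π p}), ∀ᶠ n in atTop, G.prio (π n) ≠ p :=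
    fun p hp => by
      simpa only [Set.mem_ofPred_eq, infOft_iff_frequently, not_frequently] using
        Nat.notMem_of_lt_sInf hp
  filter_upwards [(eventually_all_finite (Set.finite_Iio _)).2 hrare] with n hn
  by_contra! hlt
  exact hn _ hlt rfl

lemma wonByEven_of_progress (ρ : V → G.Meas) (π : ℕ → V)
    (h : ∀ n, G.Progress ρ (π n) (π (n + 1))) : G.WonByEven π := by
  rw [WonByEven]
  set i := sInf {p | G.InfOft π p}
  by_contra hodd
  -- `sInf ∅ = 0` is even, so the set of priorities seen infinitely often is nonempty.
  have hi : G.InfOft π i := Nat.sInf_mem <| Nat.nonempty_of_pos_sInf <|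
    Nat.pos_of_ne_zero fun h0 : i = 0 => hodd (h0 ▸ Even.zero)
  refine not_frequently_lt_of_eventually_le (a := fun n => G.trunc i (ρ (π n))) ?_ ?_
  · filter_upwards [G.eventually_sInf_infOft_le_prio π] with n hn
    replace hn : i ≤ G.prio (π n) := hn
    simpa only [G.trunc_trunc hn] using G.trunc_mono i (h n).1
  · refine ((G.infOft_iff_frequently).1 hi).mono fun n hn => ?_
    simpa only [geAt, gtAt, hn] using (h n).2 (hn ▸ hodd)

end ParityGame

open ParityGame

theorem min_successor_strategy_winning_for_even_general
    {V : Type*} [Fintype V] (G : ParityGame V)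
    (ρbar : V → G.Meas) (hgpm : G.IsGPM ρbar)
    (σ : V → V)
    (hσ : ∀ v, G.ownerEven v = true → ρbar v ≠ ⊤ →
      G.E v (σ v) ∧ ∀ w', G.E v w' → ρbar (σ v) ≤ ρbar w') :
    ∀ v : V, ρbar v ≠ ⊤ →
      ∀ π : ℕ → V, G.IsPlay π → π 0 = v →
        (∀ n, G.ownerEven (π n) = true → ρbar (π n) ≠ ⊤ → π (n + 1) = σ (π n)) →
        G.WonByEven π := by
  intro v hv π hplay h0 hcons
  have hstep : ∀ n, ρbar (π n) ≠ ⊤ → G.Progress ρbar (π n) (π (n + 1)) := by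
    intro n hn
    cases hown : G.ownerEven (π n) with
    | false => exact hgpm.progress_of_ownerEven_false hown hn (hplay n)
    | true =>
      obtain ⟨w, hw, hprog⟩ := hgpm.exists_progress_of_ownerEven hown hn
      rw [hcons n hown hn]
      exact hprog.of_le_right ((hσ _ hown hn).2 w hw)
  have hne_top : ∀ n, ρbar (π n) ≠ ⊤ := fun n => by
    induction n with
    | zero => rwa [h0]
    | succ n ih => exact (hstep n ih).ne_top ih
  exact G.wonByEven_of_progress ρbar π fun n => hstep n (hne_top n)

/-- the positional strategy for Even that moves to a successor of
minimal least-progress-measure value is winning for Even from every vertex with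
non-`⊤` least measure. -/
theorem min_successor_strategy_winning_for_even
    {V : Type*} [Fintype V] [DecidableEq V] (G : ParityGame V)
    (ρbar : V → G.Meas) (hgpm : G.IsGPM ρbar)
    (hleast : ∀ ρ : V → G.Meas, G.IsGPM ρ → ∀ v, ρbar v ≤ ρ v)
    (σ : V → V)
    (hσ : ∀ v, G.ownerEven v = true → ρbar v ≠ ⊤ →
      G.E v (σ v) ∧ ∀ w', G.E v w' → ρbar (σ v) ≤ ρbar w') :
    ∀ v : V, ρbar v ≠ ⊤ →
      ∀ π : ℕ → V, G.IsPlay π → π 0 = v →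
        (∀ n, G.ownerEven (π n) = true → ρbar (π n) ≠ ⊤ → π (n + 1) = σ (π n)) →
        G.WonByEven π :=
  min_successor_strategy_winning_for_even_general G ρbar hgpm σ hσ

end
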